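/- Let n be divisible by 5 and let G be the balanced blow-up of K_5^3 on n vertices (5 classes each of size n/5, an edge for every triple of vertices in three distinct classes). Then G contains no copy of F_{4,2} and has minimum positive co-degree exactly (3/5)n. -/
import Mathlib


lemma codeg_exact (m n : ℕ) (hn : n = 5 * m) (c : Fin n → Fin 5)
    (hsize : ∀ i : Fin 5, (Finset.univ.filter (fun v => c v = i)).card = m)
    (x y : Fin n) (hxy : x ≠ y) (hcxy : c x ≠ c y) :
    (((Finset.univ.filter (fun e : Finset (Fin n) =>
      e.card = 3 ∧ (e.image c).card = 3))).filter (fun e => x ∈ e ∧ y ∈ e)).card = 3 * m := by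
  classical
  set S : Finset (Fin n) := Finset.univ.filter (fun z => ¬(c z = c x ∨ c z = c y)) with hSdef
  have hdisj : Disjoint (Finset.univ.filter (fun z : Fin n => c z = c x))
      (Finset.univ.filter (fun z : Fin n => c z = c y)) := by
    rw [Finset.disjoint_left]
    intro z h1 h2
    simp only [Finset.mem_filter] at h1 h2
    exact hcxy (h1.2 ▸ h2.2)
  have hu : (Finset.univ.filter (fun z : Fin n => c z = c x ∨ c z = c y)).card = 2 * m := by
    rw [Finset.filter_or, Finset.card_union_of_disjoint hdisj, hsize, hsize]
    ring
  have hadd := Finset.card_filter_add_card_filter_not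
    (s := (Finset.univ : Finset (Fin n))) (p := fun z => c z = c x ∨ c z = c y)
  have huniv : (Finset.univ : Finset (Fin n)).card = 5 * m := by
    simp [hn]
  have hS : S.card = 3 * m := by
    rw [hSdef]
    omega
  rw [← hS]
  symm
  apply Finset.card_bij (fun z _ => insert x (insert y ({z} : Finset (Fin n))))
  · intro z hz
    simp only [hSdef, Finset.mem_filter, not_or] at hz
    obtain ⟨-, hzx, hzy⟩ := hz
    have hzx' : z ≠ x := fun h => hzx (h ▸ rfl)
    have hzy' : z ≠ y := fun h => hzy (h ▸ rfl)
    simp only [Finset.mem_filter, Finset.mem_univ, true_and]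
    refine ⟨⟨?_, ?_⟩, ?_, ?_⟩
    · rw [Finset.card_insert_of_notMem (by simp [hxy, Ne.symm hzx']),
        Finset.card_insert_of_notMem (by simp [Ne.symm hzy'])]
      rfl
    · rw [Finset.image_insert, Finset.image_insert, Finset.image_singleton,
        Finset.card_insert_of_notMem (by simp [hcxy, Ne.symm hzx]),
        Finset.card_insert_of_notMem (by simp [Ne.symm hzy])]
      rfl
    · simp
    · simp
  · intro z1 h1 z2 h2 heq
    simp only [hSdef, Finset.mem_filter, not_or] at h1 h2
    have hm1 : z1 ∈ insert x (insert y ({z2} : Finset (Fin n))) := by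
      rw [← heq]; simp
    have hz1x : z1 ≠ x := fun h => h1.2.1 (h ▸ rfl)
    have hz1y : z1 ≠ y := fun h => h1.2.2 (h ▸ rfl)
    simp only [Finset.mem_insert, Finset.mem_singleton] at hm1
    tauto
  · intro e he
    simp only [Finset.mem_filter, Finset.mem_univ, true_and] at he
    obtain ⟨⟨hcard, himg⟩, hx, hy⟩ := he
    have hinj : Set.InjOn c ↑e := by
      apply Finset.card_image_iff.mp
      rw [himg, hcard]
    have h1 : (e.erase x).card = 2 := by
      rw [Finset.card_erase_of_mem hx, hcard]
    have hy1 : y ∈ e.erase x := Finset.mem_erase.mpr ⟨Ne.symm hxy, hy⟩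
    have h2 : ((e.erase x).erase y).card = 1 := by
      rw [Finset.card_erase_of_mem hy1, h1]
    obtain ⟨z, hz⟩ := Finset.card_eq_one.mp h2
    have hze : z ∈ e := by
      have : z ∈ (e.erase x).erase y := by rw [hz]; simp
      exact Finset.mem_of_mem_erase (Finset.mem_of_mem_erase this)
    have hzx : z ≠ x := by
      have : z ∈ (e.erase x).erase y := by rw [hz]; simp
      exact Finset.ne_of_mem_erase (Finset.mem_of_mem_erase this)
    have hzy : z ≠ y := by
      have : z ∈ (e.erase x).erase y := by rw [hz]; simp
      exact Finset.ne_of_mem_erase this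
    refine ⟨z, ?_, ?_⟩
    · simp only [hSdef, Finset.mem_filter, Finset.mem_univ, true_and, not_or]
      exact ⟨fun h => hzx (hinj hze hx h), fun h => hzy (hinj hze hy h)⟩
    · have hsub : insert x (insert y ({z} : Finset (Fin n))) ⊆ e := by
        intro t ht
        simp only [Finset.mem_insert, Finset.mem_singleton] at ht
        rcases ht with rfl | rfl | rfl <;> assumption
      have hc3 : (insert x (insert y ({z} : Finset (Fin n)))).card = 3 := by
        rw [Finset.card_insert_of_notMem (by simp [hxy, Ne.symm hzx]),
          Finset.card_insert_of_notMem (by simp [Ne.symm hzy])]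
        rfl
      exact Finset.eq_of_subset_of_card_le hsub (by omega)

/-- The 3-graph `F_{4,2}` on vertex set `Fin 6` (vertices `1..6` are `0..5`):
edges `{123, 124, 134, 156, 256, 356, 456}`. -/
def F42 : Finset (Finset (Fin 6)) :=
  {{0, 1, 2}, {0, 1, 3}, {0, 2, 3}, {0, 4, 5}, {1, 4, 5}, {2, 4, 5}, {3, 4, 5}}

/-- Let `n = 5m` and let `G` be the balanced blow-up of `K_5^3`
(`c` gives the class of each vertex, each of the 5 classes has size `m`; a triple
is an edge iff its vertices lie in three distinct classes). Then `G` contains no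
copy of `F_{4,2}` and has minimum positive co-degree exactly `3m = (3/5)n`. -/
theorem stmt_7 (m n : ℕ) (hm : 1 ≤ m) (hn : n = 5 * m)
    (c : Fin n → Fin 5)
    (hsize : ∀ i : Fin 5, (Finset.univ.filter (fun v => c v = i)).card = m)
    (G : Finset (Finset (Fin n)))
    (hG : G = Finset.univ.filter (fun e : Finset (Fin n) =>
      e.card = 3 ∧ (e.image c).card = 3)) :
    -- no copy of F_{4,2}
    (¬ ∃ v : Fin 6 → Fin n, Function.Injective v ∧ ∀ e ∈ F42, e.image v ∈ G) ∧
    -- minimum positive co-degree exactly 3m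
    (∀ x y : Fin n, x ≠ y → (∃ e ∈ G, x ∈ e ∧ y ∈ e) →
      3 * m ≤ (G.filter (fun e => x ∈ e ∧ y ∈ e)).card) ∧
    (∃ x y : Fin n, x ≠ y ∧ (∃ e ∈ G, x ∈ e ∧ y ∈ e) ∧
      (G.filter (fun e => x ∈ e ∧ y ∈ e)).card = 3 * m) := by
  classical
  have hcne : ∀ x y : Fin n, x ≠ y → (∃ e ∈ G, x ∈ e ∧ y ∈ e) → c x ≠ c y := by
    rintro x y hxy ⟨e, heG, hx, hy⟩
    rw [hG, Finset.mem_filter] at heG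
    obtain ⟨-, hcard, himg⟩ := heG
    have hinj : Set.InjOn c ↑e := by
      apply Finset.card_image_iff.mp
      rw [himg, hcard]
    exact fun h => hxy (hinj hx hy h)
  refine ⟨?_, ?_, ?_⟩
  · rintro ⟨v, hvinj, hv⟩
    have key : ∀ e ∈ F42, Set.InjOn (c ∘ v) ↑e := by
      intro e he
      have h1 := hv e he
      rw [hG, Finset.mem_filter] at h1
      have h2 := h1.2.2
      rw [Finset.image_image] at h2
      have hcard : e.card = 3 := by fin_cases he <;> decide
      apply Finset.card_image_iff.mp
      rw [h2, hcard]
    have cover : ∀ i j : Fin 6, i ≠ j → ∃ e ∈ F42, i ∈ e ∧ j ∈ e := by decide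
    have hinj : Function.Injective (c ∘ v) := by
      intro i j h
      by_contra hij
      obtain ⟨e, he, hi, hj⟩ := cover i j hij
      exact hij (key e he (by simpa using hi) (by simpa using hj) h)
    have h65 := Fintype.card_le_of_injective _ hinj
    simp only [Fintype.card_fin] at h65
    omega
  · intro x y hxy hex
    have := codeg_exact m n hn c hsize x y hxy (hcne x y hxy hex)
    rw [hG]
    omega
  · obtain ⟨x, hx⟩ := Finset.card_pos.mp (by rw [hsize 0]; omega :
      0 < (Finset.univ.filter (fun v => c v = (0 : Fin 5))).card)
    obtain ⟨y, hy⟩ := Finset.card_pos.mp (by rw [hsize 1]; omega :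
      0 < (Finset.univ.filter (fun v => c v = (1 : Fin 5))).card)
    obtain ⟨z, hz⟩ := Finset.card_pos.mp (by rw [hsize 2]; omega :
      0 < (Finset.univ.filter (fun v => c v = (2 : Fin 5))).card)
    simp only [Finset.mem_filter, Finset.mem_univ, true_and] at hx hy hz
    have hxy : x ≠ y := fun h => by rw [h, hy] at hx; exact absurd hx (by decide)
    have hxz : x ≠ z := fun h => by rw [h, hz] at hx; exact absurd hx (by decide)
    have hyz : y ≠ z := fun h => by rw [h, hz] at hy; exact absurd hy (by decide)
    have hedge : insert x (insert y ({z} : Finset (Fin n))) ∈ G := by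
      rw [hG, Finset.mem_filter]
      refine ⟨Finset.mem_univ _, ?_, ?_⟩
      · rw [Finset.card_insert_of_notMem (by simp [hxy, hxz]),
          Finset.card_insert_of_notMem (by simp [hyz])]
        rfl
      · rw [Finset.image_insert, Finset.image_insert, Finset.image_singleton, hx, hy, hz]
        decide
    refine ⟨x, y, hxy, ⟨_, hedge, by simp, by simp⟩, ?_⟩
    rw [hG]
    exact codeg_exact m n hn c hsize x y hxy (by rw [hx, hy]; decide)
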